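/- arXiv:2507.11927 — 2 statements merged into one kernel-verified Lean document; each statement's English description precedes it below -/
import Mathlib

section
/- Combinatorial Nullstellensatz: Let F be a field and P ∈ F[x₁,…,xₙ] a polynomial of total degree k₁ + k₂ + ⋯ + kₙ, where the kᵢ are non-negative integers. If the coefficient of the monomial x₁^{k₁} x₂^{k₂} ⋯ xₙ^{kₙ} in P is non-zero, then for any subsets S₁,…,Sₙ of F with |Sᵢ| > kᵢ for each i, there exist elements sᵢ ∈ Sᵢ such that P(s₁,…,sₙ) ≠ 0. -/
open Polynomial Finset

lemma coeff_basis_top {F : Type*} [Field F] [DecidableEq F] (S : Finset F) {x : F} (hx : x ∈ S) :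
    (Lagrange.basis S id x).coeff (S.card - 1) = Lagrange.nodalWeight S id x := by
  have h1 : Lagrange.basis S id x = Polynomial.C (Lagrange.nodalWeight S id x) *
      Lagrange.nodal (S.erase x) id := by
    rw [Lagrange.basis_eq_prod_sub_inv_mul_nodal_div hx, Lagrange.nodal_erase_eq_nodal_div hx]
  rw [h1, coeff_C_mul]
  have h2 : (Lagrange.nodal (S.erase x) id).natDegree = S.card - 1 := by
    rw [Lagrange.natDegree_nodal, card_erase_of_mem hx]
  rw [← h2, (Lagrange.nodal_monic).coeff_natDegree, mul_one]

lemma one_var {F : Type*} [Field F] [DecidableEq F] (S : Finset F) (hS : S.Nonempty) (m : ℕ)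
    (hm : m ≤ S.card - 1) :
    ∑ x ∈ S, x ^ m * Lagrange.nodalWeight S id x
      = if m = S.card - 1 then 1 else 0 := by
  have hinj : Set.InjOn (id : F → F) S := Function.injective_id.injOn
  have hdeg : (X ^ m : F[X]).degree < S.card := by
    refine lt_of_le_of_lt (degree_X_pow_le m) ?_
    exact_mod_cast Nat.lt_of_le_of_lt hm (Nat.sub_lt (card_pos.mpr hS) one_pos)
  have h := Lagrange.eq_interpolate hinj hdeg
  have h3 := congrArg (fun p => Polynomial.coeff p (S.card - 1)) h
  simp only [Lagrange.interpolate_apply, finset_sum_coeff, coeff_smul, coeff_X_pow,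
    id_eq, eval_pow, eval_X, smul_eq_mul, coeff_C_mul] at h3
  rw [eq_comm] at h3
  calc ∑ x ∈ S, x ^ m * Lagrange.nodalWeight S id x
      = ∑ x ∈ S, x ^ m * (Lagrange.basis S id x).coeff (S.card - 1) := by
        refine sum_congr rfl fun x hx => by rw [coeff_basis_top S hx]
    _ = if m = S.card - 1 then 1 else 0 := by rw [h3]; simp [eq_comm]

open MvPolynomial in
lemma mono_case {F : Type*} [Field F] [DecidableEq F] {n : ℕ} (S : Fin n → Finset F)
    (hne : ∀ i, (S i).Nonempty) (m : Fin n →₀ ℕ) (hm : ∑ i, m i ≤ ∑ i, ((S i).card - 1)) :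
    ∏ i, (∑ x ∈ S i, x ^ m i * Lagrange.nodalWeight (S i) id x)
      = if m = Finsupp.equivFunOnFinite.symm (fun i => (S i).card - 1) then 1 else 0 := by
  by_cases h : ∃ j, m j < (S j).card - 1
  · obtain ⟨j, hj⟩ := h
    rw [if_neg, Finset.prod_eq_zero (Finset.mem_univ j)]
    · rw [one_var (S j) (hne j) (m j) hj.le, if_neg hj.ne]
    · intro hmd
      rw [hmd] at hj
      simp at hj
  · push_neg at h
    have heq : ∀ i, m i = (S i).card - 1 := by
      intro i
      by_contra hne'
      have h1 : (S i).card - 1 < m i := lt_of_le_of_ne (h i) (Ne.symm hne')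
      have : ∑ i, ((S i).card - 1) < ∑ i, m i :=
        Finset.sum_lt_sum (fun i _ => h i) ⟨i, Finset.mem_univ i, h1⟩
      omega
    rw [if_pos, Finset.prod_eq_one]
    · intro i _
      rw [heq i, one_var (S i) (hne i) _ le_rfl, if_pos rfl]
    · ext i
      simp [heq i]

open MvPolynomial in
lemma coeff_formula {F : Type*} [Field F] [DecidableEq F] {n : ℕ} (S : Fin n → Finset F)
    (hne : ∀ i, (S i).Nonempty) (P : MvPolynomial (Fin n) F)
    (hd : P.totalDegree ≤ ∑ i, ((S i).card - 1)) :
    P.coeff (Finsupp.equivFunOnFinite.symm (fun i => (S i).card - 1))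
      = ∑ s ∈ Fintype.piFinset S,
          MvPolynomial.eval s P * ∏ i, Lagrange.nodalWeight (S i) id (s i) := by
  conv_lhs => rw [P.as_sum]
  have hrhs : ∀ s : Fin n → F, MvPolynomial.eval s P * ∏ i, Lagrange.nodalWeight (S i) id (s i)
      = ∑ m ∈ P.support, MvPolynomial.eval s (MvPolynomial.monomial m (P.coeff m))
          * ∏ i, Lagrange.nodalWeight (S i) id (s i) := by
    intro s
    conv_lhs => rw [P.as_sum]
    rw [map_sum, Finset.sum_mul]
  simp_rw [hrhs]
  rw [Finset.sum_comm, MvPolynomial.coeff_sum]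
  refine Finset.sum_congr rfl fun m hm => ?_
  have hsum : ∑ i, m i ≤ ∑ i, ((S i).card - 1) := by
    refine le_trans ?_ hd
    calc ∑ i, m i = m.sum fun _ e => e := (Finsupp.sum_fintype m (fun _ e => e) (fun _ => rfl)).symm
      _ ≤ P.totalDegree := MvPolynomial.le_totalDegree hm
  rw [MvPolynomial.coeff_monomial]
  calc (if m = Finsupp.equivFunOnFinite.symm (fun i => (S i).card - 1) then P.coeff m else (0:F))
      = P.coeff m * if m = Finsupp.equivFunOnFinite.symm (fun i => (S i).card - 1) then 1 else 0 := by
        by_cases h : m = Finsupp.equivFunOnFinite.symm (fun i => (S i).card - 1) <;> simp [h]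
    _ = P.coeff m * ∏ i, (∑ x ∈ S i, x ^ m i * Lagrange.nodalWeight (S i) id x) := by
        rw [mono_case S hne m hsum]
    _ = ∑ s ∈ Fintype.piFinset S,
          MvPolynomial.eval s (MvPolynomial.monomial m (P.coeff m))
            * ∏ i, Lagrange.nodalWeight (S i) id (s i) := by
        rw [Finset.prod_univ_sum, Finset.mul_sum]
        refine Finset.sum_congr rfl fun s hs => ?_
        rw [MvPolynomial.eval_monomial, Finsupp.prod_fintype _ _ (fun i => pow_zero _)]
        rw [Finset.prod_mul_distrib]
        ring



/-- **Combinatorial Nullstellensatz** (Alon). Let `P` be a polynomial over a field `F`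
in `n` variables whose total degree equals `∑ i, k i`, and suppose the coefficient of the
monomial `x₁^{k₁} ⋯ xₙ^{kₙ}` in `P` is non-zero. Then for any finite subsets
`S i ⊆ F` with `|S i| > k i`, there are `s i ∈ S i` with `P (s₁, …, sₙ) ≠ 0`. -/
theorem combinatorial_nullstellensatz {F : Type*} [Field F] {n : ℕ}
    (P : MvPolynomial (Fin n) F) (k : Fin n → ℕ)
    (hdeg : P.totalDegree = ∑ i, k i)
    (hcoeff : P.coeff (Finsupp.equivFunOnFinite.symm k) ≠ 0)
    (S : Fin n → Finset F) (hS : ∀ i, k i < (S i).card) :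
    ∃ s : Fin n → F, (∀ i, s i ∈ S i) ∧ MvPolynomial.eval s P ≠ 0 := by

  classical
  have hT : ∀ i, ∃ T ⊆ S i, T.card = k i + 1 := fun i =>
    Finset.exists_subset_card_eq (hS i)
  choose T hTS hTcard using hT
  have hk : ∀ i, (T i).card - 1 = k i := fun i => by rw [hTcard]; omega
  have hne : ∀ i, (T i).Nonempty := fun i => Finset.card_pos.mp (by rw [hTcard]; omega)
  have hfun : (fun i => (T i).card - 1) = k := funext hk
  have hd : P.totalDegree ≤ ∑ i, ((T i).card - 1) := by
    rw [hdeg]; exact le_of_eq (by simp [hk])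
  have hform := coeff_formula T hne P hd
  rw [hfun] at hform
  rw [hform] at hcoeff
  obtain ⟨s, hs, hterm⟩ := Finset.exists_ne_zero_of_sum_ne_zero hcoeff
  refine ⟨s, fun i => hTS i (Fintype.mem_piFinset.mp hs i), fun h => hterm ?_⟩
  rw [h, zero_mul]
end

section
/- Let G be a cubic graph containing an n-cycle C with n ≥ 7, let L assign each edge a list of at least 10 colors, and suppose G − V(C) has a strong L-edge-coloring φ. Then for each edge e of C, the number of colors of φ appearing on edges of G − V(C) at distance at most 2 from e is at most 4, and for each pendant edge f incident to C (joining a vertex of C to a vertex outside C), this number is at most 6; consequently the residual list of each cycle edge has size at least 6 and of each pendant edge at least 4. -/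
/-- The graph obtained from `G` by deleting the vertices of `S` (keeping the same vertex
type: all edges meeting `S` are removed). -/
def delVerts {V : Type*} (G : SimpleGraph V) (S : Set V) : SimpleGraph V where
  Adj u w := G.Adj u w ∧ u ∉ S ∧ w ∉ S
  symm := ⟨fun u w ⟨h, hu, hw⟩ => ⟨h.symm, hw, hu⟩⟩
  loopless := ⟨fun u ⟨h, _, _⟩ => G.irrefl h⟩

/-- Two edges are at distance at most 2 in `G`: they share an endpoint or some edge of
`G` meets both. -/
def withinTwo {V : Type*} (G : SimpleGraph V) (e f : Sym2 V) : Prop :=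
  (∃ v, v ∈ e ∧ v ∈ f) ∨
    ∃ g ∈ G.edgeSet, (∃ v, v ∈ e ∧ v ∈ g) ∧ (∃ v, v ∈ g ∧ v ∈ f)

/-- Two distinct edges of `G` conflict if they are at distance at most 2. -/
def edgeConflict {V : Type*} (G : SimpleGraph V) (e f : Sym2 V) : Prop :=
  e ≠ f ∧ withinTwo G e f

/-- `φ` is a strong edge coloring of `G` from the lists `L`. -/
def IsStrongListColoring {V : Type*} (G : SimpleGraph V) (L : Sym2 V → Finset ℕ)
    (φ : Sym2 V → ℕ) : Prop :=
  (∀ e ∈ G.edgeSet, ∀ f ∈ G.edgeSet, edgeConflict G e f → φ e ≠ φ f) ∧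
    ∀ e ∈ G.edgeSet, φ e ∈ L e

/-- `F_φ(e)`: the set of colors that `φ` gives to edges of `G'` at distance at most 2
from `e` in `G`. -/
def Fcolors {V : Type*} (G G' : SimpleGraph V) (φ : Sym2 V → ℕ) (e : Sym2 V) : Set ℕ :=
  {c | ∃ e' ∈ G'.edgeSet, withinTwo G e e' ∧ φ e' = c}

/-! An edge `e'` of `G - S` within distance two of an edge `xy` with `x ∈ S` is, in every
case, an edge `bz` with `z ≠ a` at a neighbour `b ∉ S` of an endpoint `a` of `xy`. In a cubic
graph each such `b` carries at most two edges besides `ab`, a cycle vertex has at most one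
neighbour off the cycle (two of its three neighbours lie on it), and the pendant vertex `w` at
most two (its third neighbour `u` lies on the cycle). So at most `2 + 2 = 4` edges of
`G - V(C)`, hence colours, are relevant to a cycle edge and at most `2 + 4 = 6` to a pendant
edge. -/

open SimpleGraph Finset

section

variable {V : Type*}

section delVerts

variable {G : SimpleGraph V} {S : Set V} {e : Sym2 V} {a : V}

lemma edgeSet_delVerts_subset : (delVerts G S).edgeSet ⊆ G.edgeSet := by
  intro e he
  induction e using Sym2.ind with
  | _ u w => exact he.1

lemma notMem_of_mem_edgeSet_delVerts (he : e ∈ (delVerts G S).edgeSet) (ha : a ∈ e) :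
    a ∉ S := by
  induction e using Sym2.ind with
  | _ u w => rcases Sym2.mem_iff.mp ha with rfl | rfl <;> [exact he.2.1; exact he.2.2]

end delVerts

def twoStepEdges [DecidableEq V] (G : SimpleGraph V) [G.LocallyFinite] (S : Set V)
    [DecidablePred (· ∈ S)] (a : V) : Finset (Sym2 V) :=
  {b ∈ G.neighborFinset a | b ∉ S}.biUnion fun b => (G.incidenceFinset b).erase s(b, a)

section twoStepEdges

variable [DecidableEq V] {G : SimpleGraph V} [G.LocallyFinite] {S : Set V}
  [DecidablePred (· ∈ S)]

lemma card_twoStepEdges_le {k : ℕ} (hdeg : ∀ v, G.degree v ≤ k) (a : V) :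
    #(twoStepEdges G S a) ≤ (k - #{w ∈ G.neighborFinset a | w ∈ S}) * (k - 1) := by
  have hout :
      #{b ∈ G.neighborFinset a | b ∉ S} ≤ k - #{w ∈ G.neighborFinset a | w ∈ S} := by
    have := card_filter_add_card_filter_not (s := G.neighborFinset a) (· ∈ S)
    rw [card_neighborFinset_eq_degree] at this
    have := hdeg a
    omega
  calc #(twoStepEdges G S a)
      ≤ ∑ b ∈ {b ∈ G.neighborFinset a | b ∉ S}, #((G.incidenceFinset b).erase s(b, a)) :=
        card_biUnion_le
    _ ≤ ∑ _b ∈ {b ∈ G.neighborFinset a | b ∉ S}, (k - 1) := by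
        gcongr with b hb
        have hba : G.Adj b a := ((mem_neighborFinset ..).mp (mem_filter.mp hb).1).symm
        rw [card_erase_of_mem ((mem_incidenceFinset ..).mpr
          (G.mk'_mem_incidenceSet_left_iff.mpr hba)), card_incidenceFinset_eq_degree]
        exact Nat.sub_le_sub_right (hdeg b) 1
    _ ≤ (k - #{w ∈ G.neighborFinset a | w ∈ S}) * (k - 1) := by
        rw [sum_const, smul_eq_mul]
        exact Nat.mul_le_mul_right _ hout

lemma mem_twoStepEdges_of_adj {a b : V} {e' : Sym2 V} (hab : G.Adj a b)
    (he' : e' ∈ (delVerts G S).edgeSet) (hb : b ∈ e') (ha : a ∉ e') :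
    e' ∈ twoStepEdges G S a := by
  simp only [twoStepEdges, mem_biUnion, mem_filter, mem_neighborFinset, mem_erase,
    mem_incidenceFinset]
  exact ⟨b, ⟨hab, notMem_of_mem_edgeSet_delVerts he' hb⟩,
    fun h => ha (h ▸ Sym2.mem_mk_right b a), edgeSet_delVerts_subset he', hb⟩

lemma exists_mem_twoStepEdges_of_withinTwo {e e' : Sym2 V} (he : e ∈ G.edgeSet)
    (he' : e' ∈ (delVerts G S).edgeSet) (hne : e ≠ e') (h : withinTwo G e e') :
    ∃ a ∈ e, e' ∈ twoStepEdges G S a := by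
  have shared : ∀ a ∈ e, a ∈ e' → ∃ a ∈ e, e' ∈ twoStepEdges G S a := by
    intro a hae hae'
    have hadj : G.Adj (Sym2.Mem.other hae) a := by
      rw [← Sym2.other_spec hae] at he
      exact he.symm
    refine ⟨_, Sym2.other_mem hae, mem_twoStepEdges_of_adj hadj he' hae' fun ho => hne ?_⟩
    rw [← Sym2.other_spec hae, ← (Sym2.mem_and_mem_iff hadj.ne.symm).mp ⟨hae', ho⟩]
  rcases h with ⟨a, hae, hae'⟩ | ⟨g, hg, ⟨a, hae, hag⟩, ⟨b, hbg, hbe'⟩⟩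
  · exact shared a hae hae'
  by_cases hae' : a ∈ e'
  · exact shared a hae hae'
  have hab : a ≠ b := fun h => hae' (h ▸ hbe')
  have hadj : G.Adj a b := by rwa [(Sym2.mem_and_mem_iff hab).mp ⟨hag, hbg⟩] at hg
  exact ⟨a, hae, mem_twoStepEdges_of_adj hadj he' hbe' hae'⟩

end twoStepEdges

lemma ncard_Fcolors_le_card {G G' : SimpleGraph V} {φ : Sym2 V → ℕ} {e : Sym2 V}
    {B : Finset (Sym2 V)} (hB : ∀ e' ∈ G'.edgeSet, withinTwo G e e' → e' ∈ B) :
    (Fcolors G G' φ e).ncard ≤ #B := by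
  have hsub : Fcolors G G' φ e ⊆ φ '' B := by
    rintro _ ⟨e', he', hwithin, rfl⟩
    exact ⟨e', hB e' he' hwithin, rfl⟩
  calc (Fcolors G G' φ e).ncard ≤ (φ '' B).ncard := Set.ncard_le_ncard hsub (Set.toFinite _)
    _ ≤ (B : Set (Sym2 V)).ncard := Set.ncard_image_le (Set.toFinite _)
    _ = #B := Set.ncard_coe_finset B

lemma Fcolors_finite [Finite V] (G G' : SimpleGraph V) (φ : Sym2 V → ℕ) (e : Sym2 V) :
    (Fcolors G G' φ e).Finite :=
  (Set.toFinite (φ '' G'.edgeSet)).subset fun _ ⟨e', he', _, hφe'⟩ => ⟨e', he', hφe'⟩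

lemma ncard_Fcolors_delVerts_le [DecidableEq V] {G : SimpleGraph V} [G.LocallyFinite]
    {S : Set V} [DecidablePred (· ∈ S)] {k : ℕ} (hdeg : ∀ v, G.degree v ≤ k)
    (φ : Sym2 V → ℕ) {x y : V} (hxy : G.Adj x y) (hx : x ∈ S) :
    (Fcolors G (delVerts G S) φ s(x, y)).ncard ≤
      (k - #{w ∈ G.neighborFinset x | w ∈ S} + (k - #{w ∈ G.neighborFinset y | w ∈ S})) *
        (k - 1) := by
  refine (ncard_Fcolors_le_card (B := twoStepEdges G S x ∪ twoStepEdges G S y)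
    fun e' he' hwithin => ?_).trans ?_
  · have hne : s(x, y) ≠ e' := fun h =>
      notMem_of_mem_edgeSet_delVerts he' (h ▸ Sym2.mem_mk_left x y) hx
    obtain ⟨a, ha, he'a⟩ := exists_mem_twoStepEdges_of_withinTwo hxy he' hne hwithin
    rcases Sym2.mem_iff.mp ha with rfl | rfl
    · exact mem_union_left _ he'a
    · exact mem_union_right _ he'a
  · rw [add_mul]
    exact (card_union_le _ _).trans
      (add_le_add (card_twoStepEdges_le hdeg x) (card_twoStepEdges_le hdeg y))

lemma SimpleGraph.Walk.IsCycle.two_le_card_filter_neighborFinset_mem {G : SimpleGraph V}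
    [G.LocallyFinite] {S : Set V} [DecidablePred (· ∈ S)] {v x : V} {c : G.Walk v v}
    (hc : c.IsCycle) (hx : x ∈ c.support) (hcS : ∀ u ∈ c.support, u ∈ S) :
    2 ≤ #{w ∈ G.neighborFinset x | w ∈ S} := by
  have hsub : c.toSubgraph.neighborSet x ⊆ ({w ∈ G.neighborFinset x | w ∈ S} : Finset V) := by
    intro w hw
    simp only [coe_filter, mem_neighborFinset, Set.mem_ofPred_eq]
    exact ⟨c.toSubgraph.neighborSet_subset x hw,
      hcS w ((c.mem_verts_toSubgraph).mp (Subgraph.Adj.snd_mem hw))⟩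
  rw [← hc.ncard_neighborSet_toSubgraph_eq_two hx, ← Set.ncard_coe_finset]
  exact Set.ncard_le_ncard hsub (finite_toSet _)

lemma sub_le_ncard_coe_sdiff {α : Type*} {s : Finset α} {t : Set α} {m k : ℕ} (hs : m ≤ #s)
    (ht : t.ncard ≤ k) (htfin : t.Finite) : m - k ≤ ((s : Set α) \ t).ncard := by
  have := Set.le_ncard_sdiff t s htfin
  rw [Set.ncard_coe_finset] at this
  omega

end

theorem residual_list_sizes_general {V : Type*} [Fintype V] [DecidableEq V]
    (G : SimpleGraph V) [DecidableRel G.Adj] (hcubic : ∀ v, G.degree v = 3)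
    (v : V) (c : G.Walk v v) (hc : c.IsCycle)
    (L : Sym2 V → Finset ℕ) (hL : ∀ e ∈ G.edgeSet, 10 ≤ (L e).card)
    (φ : Sym2 V → ℕ) :
    (∀ e ∈ c.edges,
        (Fcolors G (delVerts G {u | u ∈ c.support}) φ e).ncard ≤ 4 ∧
        6 ≤ ((L e : Set ℕ) \ Fcolors G (delVerts G {u | u ∈ c.support}) φ e).ncard) ∧
    (∀ u w, G.Adj u w → u ∈ c.support → w ∉ c.support →
        (Fcolors G (delVerts G {u | u ∈ c.support}) φ s(u, w)).ncard ≤ 6 ∧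
        4 ≤ ((L s(u, w) : Set ℕ) \
              Fcolors G (delVerts G {u | u ∈ c.support}) φ s(u, w)).ncard) := by
  set S : Set V := {u | u ∈ c.support}
  have hF := fun {x y : V} => ncard_Fcolors_delVerts_le (S := S) (x := x) (y := y)
    (fun v => (hcubic v).le) φ
  have hcyc : ∀ x ∈ c.support, 2 ≤ #{w ∈ G.neighborFinset x | w ∈ S} :=
    fun x hx => hc.two_le_card_filter_neighborFinset_mem hx fun u hu => hu
  have hfin := Fcolors_finite G (delVerts G S) φ
  refine ⟨fun e he => ?_, fun u w huw hu _ => ?_⟩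
  · induction e using Sym2.ind with
    | _ x y =>
    have hx := c.fst_mem_support_of_mem_edges he
    have hF4 : (Fcolors G (delVerts G S) φ s(x, y)).ncard ≤ 4 := by
      have := hF (c.adj_of_mem_edges he) hx
      have := hcyc x hx
      have := hcyc y (c.snd_mem_support_of_mem_edges he)
      omega
    exact ⟨hF4, sub_le_ncard_coe_sdiff (hL _ (c.edges_subset_edgeSet he)) hF4 (hfin _)⟩
  · have hwS : 1 ≤ #{b ∈ G.neighborFinset w | b ∈ S} :=
      card_pos.mpr ⟨u, mem_filter.mpr ⟨(mem_neighborFinset ..).mpr huw.symm, hu⟩⟩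
    have hF6 : (Fcolors G (delVerts G S) φ s(u, w)).ncard ≤ 6 := by
      have := hF huw hu
      have := hcyc u hu
      omega
    exact ⟨hF6, sub_le_ncard_coe_sdiff (hL _ huw) hF6 (hfin _)⟩

/-- Let `G` be a cubic graph containing a cycle `C` of length `n ≥ 7`, let `L` be a
10-edge list assignment, and let `φ` be a strong `L`-edge-coloring of `G - V(C)`.
Then for each cycle edge `e`, at most 4 colors of `φ` appear on edges of `G - V(C)` at
distance at most 2 from `e` (so its residual list has at least 6 colors), and for each
pendant edge `uw` (with `u` on `C`, `w` off `C`), at most 6 such colors appear (so its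
residual list has at least 4 colors). -/
theorem residual_list_sizes {V : Type*} [Fintype V] [DecidableEq V]
    (G : SimpleGraph V) [DecidableRel G.Adj] (hcubic : ∀ v, G.degree v = 3)
    (n : ℕ) (hn : 7 ≤ n) (v : V) (c : G.Walk v v) (hc : c.IsCycle) (hlen : c.length = n)
    (L : Sym2 V → Finset ℕ) (hL : ∀ e ∈ G.edgeSet, 10 ≤ (L e).card)
    (φ : Sym2 V → ℕ)
    (hφ : IsStrongListColoring (delVerts G {u | u ∈ c.support}) L φ) :
    (∀ e ∈ c.edges,
        (Fcolors G (delVerts G {u | u ∈ c.support}) φ e).ncard ≤ 4 ∧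
        6 ≤ ((L e : Set ℕ) \ Fcolors G (delVerts G {u | u ∈ c.support}) φ e).ncard) ∧
    (∀ u w, G.Adj u w → u ∈ c.support → w ∉ c.support →
        (Fcolors G (delVerts G {u | u ∈ c.support}) φ s(u, w)).ncard ≤ 6 ∧
        4 ≤ ((L s(u, w) : Set ℕ) \
              Fcolors G (delVerts G {u | u ∈ c.support}) φ s(u, w)).ncard) :=
  residual_list_sizes_general G hcubic v c hc L hL φ
end
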